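/- Let λ₁, λ₂, λ, c be real numbers with λ² = λ₁λ₂ and λ₁ + 3λ₂ ≠ 0. Set a = −4λ²·c/(λ₁+3λ₂)² and b = λ(λ₁−3λ₂)·c/(λ₁+3λ₂)². Then 7a² + 8b² + c² = ((λ₁² + 9λ₂² + 10λ²)/(λ₁+3λ₂)²)²·c² and (c − a)² = ((λ₁² + 9λ₂² + 10λ²)/(λ₁+3λ₂)²)²·c²; in particular (c − a)² = 7a² + 8b² + c². -/

import Mathlib

/-!
Under `l ^ 2 = l1 * l2` the numerator `l1 ^ 2 + 9 l2 ^ 2 + 10 l ^ 2` equals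
`(l1 + 3 l2) ^ 2 + 4 l ^ 2`. Writing `c = (l1 + 3 l2) ^ 2 t`, this makes `c - a` the given
multiple of `c`, and `(c - a) ^ 2 - (7 a ^ 2 + 8 b ^ 2 + c ^ 2)` becomes
`8 l ^ 2 t ^ 2 (12 l ^ 2 + (l1 - 3 l2) ^ 2 - (l1 + 3 l2) ^ 2) = 96 l ^ 2 t ^ 2 (l ^ 2 - l1 l2) = 0`.
-/

section
variable {R : Type*} [CommRing R] {l1 l2 l : R}

theorem sq_add_nine_sq_add_ten_sq_eq (hl : l ^ 2 = l1 * l2) :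
    l1 ^ 2 + 9 * l2 ^ 2 + 10 * l ^ 2 = (l1 + 3 * l2) ^ 2 + 4 * l ^ 2 := by
  linear_combination 6 * hl

theorem sub_sq_eq_seven_sq_add_eight_sq_add_sq (hl : l ^ 2 = l1 * l2) (t : R) :
    ((l1 + 3 * l2) ^ 2 * t - -4 * l ^ 2 * t) ^ 2
      = 7 * (-4 * l ^ 2 * t) ^ 2 + 8 * (l * (l1 - 3 * l2) * t) ^ 2
        + ((l1 + 3 * l2) ^ 2 * t) ^ 2 := by
  linear_combination (-96 * l ^ 2 * t ^ 2) * hl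

end

theorem stmt_8 (l1 l2 l c : ℝ) (hl : l ^ 2 = l1 * l2)
    (hne : l1 + 3 * l2 ≠ 0)
    (a b : ℝ)
    (ha : a = -4 * l ^ 2 * c / (l1 + 3 * l2) ^ 2)
    (hb : b = l * (l1 - 3 * l2) * c / (l1 + 3 * l2) ^ 2) :
    7 * a ^ 2 + 8 * b ^ 2 + c ^ 2
      = ((l1 ^ 2 + 9 * l2 ^ 2 + 10 * l ^ 2) / (l1 + 3 * l2) ^ 2) ^ 2 * c ^ 2 ∧
    (c - a) ^ 2
      = ((l1 ^ 2 + 9 * l2 ^ 2 + 10 * l ^ 2) / (l1 + 3 * l2) ^ 2) ^ 2 * c ^ 2 ∧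
    (c - a) ^ 2 = 7 * a ^ 2 + 8 * b ^ 2 + c ^ 2 := by
  set t := c / (l1 + 3 * l2) ^ 2 with ht
  have hc : c = (l1 + 3 * l2) ^ 2 * t := (mul_div_cancel₀ c (pow_ne_zero 2 hne)).symm
  have ha' : a = -4 * l ^ 2 * t := by rw [ha, mul_div_assoc]
  have hb' : b = l * (l1 - 3 * l2) * t := by rw [hb, mul_div_assoc]
  have hsub : c - a = (l1 ^ 2 + 9 * l2 ^ 2 + 10 * l ^ 2) / (l1 + 3 * l2) ^ 2 * c := by
    rw [div_mul_comm, ← ht, sq_add_nine_sq_add_ten_sq_eq hl, ha', hc]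
    ring
  have hsq : (c - a) ^ 2 = 7 * a ^ 2 + 8 * b ^ 2 + c ^ 2 := by
    rw [ha', hb', hc]
    exact sub_sq_eq_seven_sq_add_eight_sq_add_sq hl t
  have hsub_sq := congrArg (· ^ 2) hsub
  simp only [mul_pow] at hsub_sq
  exact ⟨hsq ▸ hsub_sq, hsub_sq, hsq⟩
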